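/- Let G be a finite group and π a set of primes. Suppose that for every prime p ∉ π and every prime q ∈ π, q does not divide |G/O_{p',p}(G)| (i.e., the Hawkes graph Γ_H(G) has no edge from a vertex outside π to a vertex in π). Then G has a normal Hall π-subgroup, i.e., a normal subgroup H whose order is a π-number and whose index in G is a π'-number. -/

import Mathlib

/-- The join of a set of normal subgroups is normal. -/
theorem sSup_normal {G : Type*} [Group G] (S : Set (Subgroup G)) (hS : ∀ N ∈ S, N.Normal) :
    (sSup S).Normal := by
  constructor
  intro n hn g
  rw [sSup_eq_iSup'] at hn ⊢
  refine Subgroup.iSup_induction (C := fun x => g * x * g⁻¹ ∈ ⨆ N : S, (N : Subgroup G))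
    _ hn ?_ ?_ ?_
  · intro N x hx
    exact Subgroup.mem_iSup_of_mem N ((hS N N.2).conj_mem x hx g)
  · simpa using Subgroup.one_mem _
  · intro x y hx hy
    have h : g * (x * y) * g⁻¹ = (g * x * g⁻¹) * (g * y * g⁻¹) := by group
    rw [h]; exact Subgroup.mul_mem _ hx hy

/-- The `p'`-core `O_{p'}(G)`: the largest normal subgroup of `G` of order coprime to `p`,
realized as the join of all normal subgroups of order coprime to `p`. -/
def pPrimeCore (p : ℕ) (G : Type*) [Group G] : Subgroup G :=
  sSup {N : Subgroup G | N.Normal ∧ Nat.Coprime (Nat.card N) p}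

instance pPrimeCore_normal (p : ℕ) (G : Type*) [Group G] : (pPrimeCore p G).Normal :=
  sSup_normal _ fun _ hN => hN.1

/-- The `p`-core `O_p(G)`: the largest normal `p`-subgroup of `G`,
realized as the join of all normal `p`-subgroups. -/
def pCore (p : ℕ) (G : Type*) [Group G] : Subgroup G :=
  sSup {N : Subgroup G | N.Normal ∧ IsPGroup p N}

instance pCore_normal (p : ℕ) (G : Type*) [Group G] : (pCore p G).Normal :=
  sSup_normal _ fun _ hN => hN.1

/-- `O_{p',p}(G)`: the preimage in `G` of `O_p(G / O_{p'}(G))`. -/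
def OpPrimeP (p : ℕ) (G : Type*) [Group G] : Subgroup G :=
  (pCore p (G ⧸ pPrimeCore p G)).comap (QuotientGroup.mk' (pPrimeCore p G))

/-- A Schmidt group: a non-nilpotent group all of whose proper subgroups are nilpotent. -/
def IsSchmidt (G : Type*) [Group G] : Prop :=
  ¬ Group.IsNilpotent G ∧ ∀ H : Subgroup G, H ≠ ⊤ → Group.IsNilpotent H

/-- A Schmidt `(p,q)`-group: a Schmidt group whose order is divisible by exactly the
primes `p` and `q` and whose Sylow `p`-subgroup is normal. -/
def IsSchmidtPQ (p q : ℕ) (G : Type*) [Group G] : Prop :=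
  IsSchmidt G ∧ (Nat.card G).primeFactors = {p, q} ∧ ∃ P : Sylow p G, (P : Subgroup G).Normal

/-!
Induct on `|G|`. If `G` is not a `π`-group, pick a prime `p ∉ π` dividing `|G|`; then
`M = O_{p'}(G)` is a proper normal subgroup, and `|G : M| = |G : O_{p',p}(G)| · |O_p(G/M)|` is a
`π'`-number, by the hypothesis and since `p ∉ π`. The hypothesis passes to normal subgroups `N`,
because `O_{p',p}(G) ∩ N ≤ O_{p',p}(N)`, so `M` has a normal Hall `π`-subgroup `H`. As the set of
`π`-elements of `M`, `H` is characteristic in `M`, hence normal in `G`, and it is a Hall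
`π`-subgroup of `G` because `|G : H| = |M : H| · |G : M|`.
-/

open Subgroup

/-- A `π'`-number is an `IsPiNumber πᶜ`. -/
def IsPiNumber (π : Set ℕ) (n : ℕ) : Prop :=
  ∀ r : ℕ, r.Prime → r ∣ n → r ∈ π

section PiNumber

variable {π : Set ℕ} {m n : ℕ}

lemma IsPiNumber.of_dvd (hn : IsPiNumber π n) (hmn : m ∣ n) : IsPiNumber π m :=
  fun r hr hrm => hn r hr (hrm.trans hmn)

lemma IsPiNumber.mul (hm : IsPiNumber π m) (hn : IsPiNumber π n) : IsPiNumber π (m * n) :=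
  fun r hr hrmn => (hr.dvd_mul.mp hrmn).elim (hm r hr) (hn r hr)

lemma isPiNumber_one : IsPiNumber π 1 :=
  fun _ hr hr1 => absurd (Nat.dvd_one.mp hr1) hr.ne_one

lemma IsPiNumber.eq_one_of_compl (h : IsPiNumber π n) (hc : IsPiNumber πᶜ n) : n = 1 := by
  by_contra hn
  obtain ⟨r, hr, hrn⟩ := Nat.exists_prime_and_dvd hn
  exact hc r hr hrn (h r hr hrn)

lemma IsPGroup.isPiNumber_card {p : ℕ} [Fact p.Prime] {G : Type*} [Group G] [Finite G]
    (hG : IsPGroup p G) (hp : p ∈ π) : IsPiNumber π (Nat.card G) := by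
  obtain ⟨k, hk⟩ := IsPGroup.iff_card.mp hG
  intro r hr hrG
  rw [hk] at hrG
  exact (Nat.prime_dvd_prime_iff_eq hr Fact.out).mp (hr.dvd_of_dvd_pow hrG) ▸ hp

end PiNumber

namespace Subgroup

variable {G : Type*} [Group G]

def IsHall (π : Set ℕ) (H : Subgroup G) : Prop :=
  IsPiNumber π (Nat.card H) ∧ IsPiNumber πᶜ H.index

variable {π : Set ℕ}

lemma isHall_top (hG : IsPiNumber π (Nat.card G)) : (⊤ : Subgroup G).IsHall π :=
  ⟨by rwa [card_top], by rw [index_top]; exact isPiNumber_one⟩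

lemma IsHall.map_subtype {M : Subgroup G} {H : Subgroup M} (hH : H.IsHall π)
    (hM : IsPiNumber πᶜ M.index) : (H.map M.subtype).IsHall π :=
  ⟨by rw [card_map_of_injective M.subtype_injective]; exact hH.1,
    by rw [index_map_subtype]; exact hH.2.mul hM⟩

lemma card_subgroupOf_dvd (H K : Subgroup G) : Nat.card (H.subgroupOf K) ∣ Nat.card H := by
  rw [← card_map_of_injective K.subtype_injective, subgroupOf_map_subtype]
  exact card_dvd_of_le inf_le_left

lemma card_sup_dvd_mul (A B : Subgroup G) [B.Normal] :
    Nat.card (A ⊔ B : Subgroup G) ∣ Nat.card A * Nat.card B := by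
  rw [← card_mul_index (B.subgroupOf (A ⊔ B)), mul_comm (Nat.card A)]
  exact mul_dvd_mul (card_subgroupOf_dvd B _)
    (by rw [← relIndex, relIndex_sup_right]; exact relIndex_dvd_card B A)

lemma IsHall.mem_iff {H : Subgroup G} [H.Normal] (hH : H.IsHall π) {x : G} :
    x ∈ H ↔ IsPiNumber π (orderOf x) := by
  refine ⟨fun hx => hH.1.of_dvd (orderOf_dvd_natCard H hx), fun hx => ?_⟩
  rw [← QuotientGroup.eq_one_iff (N := H) x, ← orderOf_eq_one_iff]
  refine (hx.of_dvd (orderOf_map_dvd (QuotientGroup.mk' H) x)).eq_one_of_compl (hH.2.of_dvd ?_)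
  rw [index_eq_card]
  exact _root_.orderOf_dvd_natCard (x : G ⧸ H)

lemma IsHall.characteristic {H : Subgroup G} [H.Normal] (hH : H.IsHall π) : H.Characteristic :=
  characteristic_iff_comap_le.mpr fun φ x hx => by
    rw [mem_comap, hH.mem_iff] at hx
    rwa [hH.mem_iff, ← MulEquiv.orderOf_eq φ]

lemma IsHall.normal_map_subtype {M : Subgroup G} [M.Normal] {H : Subgroup M} [H.Normal]
    (hH : H.IsHall π) : (H.map M.subtype).Normal :=
  have := hH.characteristic
  inferInstance

lemma sSup_setOf_normal_and [Finite G] {P : Subgroup G → Prop} (hbot : P ⊥)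
    (hsup : ∀ A B : Subgroup G, A.Normal → B.Normal → P A → P B → P (A ⊔ B)) :
    P (sSup {N | N.Normal ∧ P N}) := by
  refine (SupClosed.sSup_mem (s := {N : Subgroup G | N.Normal ∧ P N}) ?_ (Set.toFinite _)
    ⟨normal_bot, hbot⟩ subset_rfl).2
  rintro A ⟨hA, hAP⟩ B ⟨hB, hBP⟩
  exact ⟨sup_normal A B, hsup A B hA hB hAP hBP⟩

end Subgroup

section Cores

instance OpPrimeP_normal (p : ℕ) (G : Type*) [Group G] : (OpPrimeP p G).Normal :=
  (pCore_normal p _).comap _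

variable {p : ℕ} {G : Type*} [Group G]

lemma le_pPrimeCore {N : Subgroup G} [hN : N.Normal] (hNp : (Nat.card N).Coprime p) :
    N ≤ pPrimeCore p G :=
  le_sSup ⟨hN, hNp⟩

lemma le_pCore {N : Subgroup G} [hN : N.Normal] (hNp : IsPGroup p N) : N ≤ pCore p G :=
  le_sSup ⟨hN, hNp⟩

variable (p G) in
lemma index_pPrimeCore_eq :
    (pPrimeCore p G).index = (OpPrimeP p G).index * Nat.card (pCore p (G ⧸ pPrimeCore p G)) := by
  rw [index_eq_card, ← index_mul_card (pCore p _), OpPrimeP,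
    index_comap_of_surjective _ (QuotientGroup.mk'_surjective _)]

variable [Finite G]

variable (p G) in
lemma coprime_card_pPrimeCore : (Nat.card (pPrimeCore p G)).Coprime p :=
  sSup_setOf_normal_and (P := fun N => (Nat.card N).Coprime p) (by simp) fun A B _ _ hAp hBp =>
    (hAp.mul_left hBp).coprime_dvd_left (card_sup_dvd_mul A B)

variable (G) in
lemma isPGroup_pCore : IsPGroup p (pCore p G) :=
  sSup_setOf_normal_and (P := fun N => IsPGroup p N) IsPGroup.of_bot fun _ _ _ _ hAp hBp =>
    hAp.to_sup_of_normal_right hBp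

lemma pPrimeCore_subgroupOf_le (N : Subgroup G) [N.Normal] :
    (pPrimeCore p G).subgroupOf N ≤ pPrimeCore p N :=
  le_pPrimeCore ((coprime_card_pPrimeCore p G).coprime_dvd_left (card_subgroupOf_dvd _ N))

lemma exists_pow_mem_pPrimeCore {x : G} (hx : x ∈ OpPrimeP p G) :
    ∃ k : ℕ, x ^ p ^ k ∈ pPrimeCore p G := by
  obtain ⟨k, hk⟩ := isPGroup_pCore (G ⧸ pPrimeCore p G) ⟨_, hx⟩
  exact ⟨k, (QuotientGroup.eq_one_iff _).mp (congrArg Subtype.val hk)⟩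

lemma OpPrimeP_subgroupOf_le (N : Subgroup G) [N.Normal] :
    (OpPrimeP p G).subgroupOf N ≤ OpPrimeP p N := by
  set K := ((OpPrimeP p G).subgroupOf N).map (QuotientGroup.mk' (pPrimeCore p N))
  have hK : IsPGroup p K := by
    rintro ⟨_, z, hz, rfl⟩
    obtain ⟨k, hk⟩ := exists_pow_mem_pPrimeCore (mem_subgroupOf.mp hz)
    refine ⟨k, Subtype.ext ((QuotientGroup.eq_one_iff (z ^ p ^ k)).mpr ?_)⟩
    exact pPrimeCore_subgroupOf_le N (mem_subgroupOf.mpr (by simpa using hk))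
  have : K.Normal := (OpPrimeP_normal p G).subgroupOf N |>.map _ (QuotientGroup.mk'_surjective _)
  exact fun x hx => le_pCore hK (mem_map_of_mem _ hx)

lemma index_OpPrimeP_dvd (N : Subgroup G) [N.Normal] :
    (OpPrimeP p N).index ∣ (OpPrimeP p G).index :=
  (index_dvd_of_le (OpPrimeP_subgroupOf_le N)).trans (relIndex_dvd_index_of_normal _ _)

end Cores

theorem exists_normal_isHall_of_isPiNumber_compl_index_OpPrimeP (π : Set ℕ) {G : Type*}
    [Group G] [Finite G] (hG : ∀ p, p.Prime → p ∉ π → IsPiNumber πᶜ (OpPrimeP p G).index) :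
    ∃ H : Subgroup G, H.Normal ∧ H.IsHall π := by
  induction hn : Nat.card G using Nat.strong_induction_on generalizing G with
  | _ n ih =>
  by_cases hπ : IsPiNumber π (Nat.card G)
  · exact ⟨⊤, inferInstance, isHall_top hπ⟩
  obtain ⟨p, hp, hpG, hpπ⟩ : ∃ p, p.Prime ∧ p ∣ Nat.card G ∧ p ∉ π := by
    simpa [IsPiNumber] using hπ
  have := Fact.mk hp
  set M := pPrimeCore p G
  have hMG : Nat.card M < n := by
    refine hn ▸ lt_of_le_of_ne (card_le_card_group M) fun hM => ?_
    exact hp.ne_one ((coprime_card_pPrimeCore p G).symm.eq_one_of_dvd (by rwa [hM]))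
  have hMindex : IsPiNumber πᶜ M.index := by
    rw [index_pPrimeCore_eq]
    exact (hG p hp hpπ).mul ((isPGroup_pCore _).isPiNumber_card hpπ)
  obtain ⟨H, _, hH⟩ := ih _ hMG (fun q hq hqπ => (hG q hq hqπ).of_dvd (index_OpPrimeP_dvd M)) rfl
  exact ⟨_, hH.normal_map_subtype, hH.map_subtype hMindex⟩

/-- If the Hawkes graph of `G` has no edge from a vertex outside `π` to a vertex in `π`
(i.e., for all primes `p ∉ π` and `q ∈ π`, `q` does not divide `|G/O_{p',p}(G)|`),
then `G` has a normal Hall `π`-subgroup. -/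
theorem hawkes_normal_hall {G : Type*} [Group G] [Finite G] (π : Set ℕ)
    (h : ∀ p q : ℕ, p.Prime → q.Prime → p ∉ π → q ∈ π →
      ¬ q ∣ Nat.card (G ⧸ OpPrimeP p G)) :
    ∃ H : Subgroup G, H.Normal ∧
      (∀ r : ℕ, r.Prime → r ∣ Nat.card H → r ∈ π) ∧
      (∀ r : ℕ, r.Prime → r ∣ H.index → r ∉ π) :=
  exists_normal_isHall_of_isPiNumber_compl_index_OpPrimeP π fun p hp hpπ q hq hqp hqπ =>
    h p q hp hq hpπ hqπ (index_eq_card (OpPrimeP p G) ▸ hqp)
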